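/- Let κ ∈ ℕⁿ with each κ_s ≥ 1, N = |κ|, and let A and B be defined as: A_{y,κ,s,r} = (−y_s)^{N−κ_s}/(∏_{d≠s}(y_d−y_s)^{κ_d})·h_{κ_s−r}((y_d/(y_d−y_s))_{d≠s}, each repeated κ_d times) and B_{y,κ,s,r} = (−1)^{N−κ_s}(∏_{d≠s}(y_d−y_s)^{−κ_d})·h_{κ_s−r}((1/(y_d−y_s))_{d≠s}, each repeated κ_d times). Then for every s and every m ≥ 0: Σ_{r=1}^{κ_s} binomial(m+r−1, r−1)·A_{y,κ,s,r} = Σ_{r=1}^{κ_s} binomial(m+N−1, r−1)·B_{y,κ,s,r}·y_s^{N−r}, as an identity in F(y₁,…,yₙ). -/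

import Mathlib

/-!
With `z_p = y_s / (y_d - y_s)` the arguments `y_d / (y_d - y_s)` of `h` in `A` are `1 + z_p`, and
in `B` the factor `y_s ^ (κ_s - r)` scales the arguments `1 / (y_d - y_s)` to `z_p`. Both sides
then carry the factor `(-y_s) ^ (N - κ_s) / ∏ (y_d - y_s) ^ κ_d`, and what remains, with
`k = κ_s - 1` and `M = N - κ_s` variables, is
`∑_{a+b=k} C(m+a, a) h_b(1 + z) = ∑_{a+b=k} C(m+k+M, a) h_b(z)`:
both sides are the coefficient of `t^k` in `(1-t)^(-m-1) ∏ (1 - (1 + z_i) t)⁻¹`.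
This is proved by induction on the set of variables. Adjoining a variable `x` and expanding with
the one-variable case `∑_{a+c=e} C(m+a, a) (1+x)^c = ∑_{a+c=e} C(m+e+1, a) x^c` reduces it to the
identity for the remaining variables with `m` replaced by `m + c + 1`.
-/

/-- Complete homogeneous polynomial of degree `m` in variables `x j`, `j : ι`. -/
noncomputable def homog {ι : Type*} [Fintype ι] [DecidableEq ι] {R : Type*} [CommSemiring R]
    (m : ℕ) (x : ι → R) : R :=
  ∑ k ∈ Finset.univ.piAntidiag m, ∏ j, x j ^ k j

/-- The coefficient `A_{y,κ,s,r}`. -/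
noncomputable def Acoef {K : Type*} [Field K] {n : ℕ} (y : Fin n → K) (κ : Fin n → ℕ)
    (s : Fin n) (r : ℕ) : K :=
  (-(y s)) ^ ((∑ j, κ j) - κ s)
    / (∏ d ∈ Finset.univ.erase s, (y d - y s) ^ κ d)
    * homog (κ s - r)
        (fun p : Σ d : {d : Fin n // d ≠ s}, Fin (κ d.1) => y p.1.1 / (y p.1.1 - y s))

/-- The coefficient `B_{y,κ,s,r}`. -/
noncomputable def Bcoef {K : Type*} [Field K] {n : ℕ} (y : Fin n → K) (κ : Fin n → ℕ)
    (s : Fin n) (r : ℕ) : K :=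
  (-1 : K) ^ ((∑ j, κ j) - κ s)
    * (∏ d ∈ Finset.univ.erase s, (y d - y s) ^ κ d)⁻¹
    * homog (κ s - r)
        (fun p : Σ d : {d : Fin n // d ≠ s}, Fin (κ d.1) => (y p.1.1 - y s)⁻¹)

open Finset

section Reindexing

variable {M : Type*} [AddCommMonoid M]

theorem sum_antidiagonal_assoc (f : ℕ → ℕ → ℕ → M) (n : ℕ) :
    ∑ p ∈ antidiagonal n, ∑ q ∈ antidiagonal p.2, f p.1 q.1 q.2
      = ∑ p ∈ antidiagonal n, ∑ q ∈ antidiagonal p.1, f q.1 q.2 p.2 := by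
  rw [sum_sigma', sum_sigma']
  refine sum_nbij' (fun x => ⟨(x.1.1 + x.2.1, x.2.2), (x.1.1, x.2.1)⟩)
    (fun x => ⟨(x.2.1, x.2.2 + x.1.2), (x.2.2, x.1.2)⟩) ?_ ?_ ?_ ?_ (fun _ _ => rfl)
  all_goals
    rintro ⟨⟨a, b⟩, ⟨c, d⟩⟩ h
    simp only [mem_sigma, HasAntidiagonal.mem_antidiagonal, and_true] at h ⊢
  all_goals first | omega | (obtain ⟨-, rfl⟩ := h; rfl)

theorem sum_antidiagonal_antidiagonal_middle (f : ℕ → ℕ → ℕ → M) (n : ℕ) :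
    ∑ p ∈ antidiagonal n, ∑ q ∈ antidiagonal p.1, f q.1 q.2 p.2
      = ∑ p ∈ antidiagonal n, ∑ q ∈ antidiagonal p.2, f q.1 p.1 q.2 := by
  rw [sum_antidiagonal_assoc (fun c a d => f a c d)]
  exact sum_congr rfl fun p _ => (Nat.sum_antidiagonal_swap (f := fun q => f q.1 q.2 p.2)).symm

theorem sum_Icc_one_eq_sum_range (f : ℕ → M) (k : ℕ) :
    ∑ r ∈ Icc 1 k, f r = ∑ a ∈ range k, f (a + 1) := by
  rw [range_eq_Ico, sum_Ico_add', zero_add, Ico_add_one_right_eq_Icc]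

end Reindexing

section Convolution

variable {R : Type*} [CommSemiring R]

theorem sum_antidiagonal_mul_ite_snd_eq_zero (f : ℕ × ℕ → R) (k : ℕ) :
    ∑ p ∈ antidiagonal k, f p * (if p.2 = 0 then 1 else 0) = f (k, 0) := by
  rw [sum_eq_single_of_mem (k, 0) (by simp)]
  · simp
  · rintro ⟨a, b⟩ hab hne
    have hb : b ≠ 0 := by rintro rfl; simp_all
    simp [hb]

theorem sum_antidiagonal_mul_sum_antidiagonal_comm (c x g : ℕ → R) (k : ℕ) :
    ∑ p ∈ antidiagonal k, c p.1 * ∑ q ∈ antidiagonal p.2, x q.1 * g q.2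
      = ∑ p ∈ antidiagonal k, x p.1 * ∑ q ∈ antidiagonal p.2, c q.1 * g q.2 := by
  simp only [mul_sum]
  rw [sum_antidiagonal_assoc (fun a b d => c a * (x b * g d)),
    sum_antidiagonal_antidiagonal_middle (fun a b d => c a * (x b * g d))]
  exact sum_congr rfl fun _ _ => sum_congr rfl fun _ _ => by ring

theorem sum_antidiagonal_choose_mul_one_add_pow (m : ℕ) (x : R) (e : ℕ) :
    ∑ p ∈ antidiagonal e, ((m + p.1).choose p.1 : R) * (1 + x) ^ p.2
      = ∑ p ∈ antidiagonal e, ((m + e + 1).choose p.1 : R) * x ^ p.2 := by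
  induction e with
  | zero => simp
  | succ e ih =>
    have hL : ∑ p ∈ antidiagonal (e + 1), ((m + p.1).choose p.1 : R) * (1 + x) ^ p.2
        = ((m + e + 1).choose (e + 1) : R)
          + (1 + x) * ∑ p ∈ antidiagonal e, ((m + p.1).choose p.1 : R) * (1 + x) ^ p.2 := by
      rw [Nat.sum_antidiagonal_succ', mul_sum]
      simp only [pow_zero, mul_one, pow_succ, ← add_assoc]
      congr 1
      exact sum_congr rfl fun _ _ => by ring
    have hx : ∑ p ∈ antidiagonal (e + 1), ((m + e + 1).choose p.1 : R) * x ^ p.2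
        = ((m + e + 1).choose (e + 1) : R)
          + x * ∑ p ∈ antidiagonal e, ((m + e + 1).choose p.1 : R) * x ^ p.2 := by
      rw [Nat.sum_antidiagonal_succ', mul_sum]
      simp only [pow_zero, mul_one, pow_succ]
      congr 1
      exact sum_congr rfl fun _ _ => by ring
    have hR : ∑ p ∈ antidiagonal (e + 1), ((m + (e + 1) + 1).choose p.1 : R) * x ^ p.2
        = ∑ p ∈ antidiagonal e, ((m + e + 1).choose p.1 : R) * x ^ p.2
          + ∑ p ∈ antidiagonal (e + 1), ((m + e + 1).choose p.1 : R) * x ^ p.2 := by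
      rw [Nat.sum_antidiagonal_succ,
        Nat.sum_antidiagonal_succ (f := fun p => ((m + e + 1).choose p.1 : R) * x ^ p.2)]
      simp only [Nat.choose_zero_right, show m + (e + 1) + 1 = m + e + 1 + 1 by ring,
        Nat.choose_succ_succ', Nat.cast_add, add_mul, sum_add_distrib]
      ring
    rw [hL, ih, hR, hx]
    ring

theorem sum_antidiagonal_choose_mul_sum_one_add_pow (m : ℕ) (x : R) (g : ℕ → R) (k : ℕ) :
    ∑ p ∈ antidiagonal k, ((m + p.1).choose p.1 : R) * ∑ q ∈ antidiagonal p.2, (1 + x) ^ q.1 * g q.2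
      = ∑ p ∈ antidiagonal k, x ^ p.1 *
          ∑ q ∈ antidiagonal p.2, ((m + p.1 + 1 + q.1).choose q.1 : R) * g q.2 := by
  calc _ = ∑ p ∈ antidiagonal k,
          (∑ q ∈ antidiagonal p.1, ((m + q.1).choose q.1 : R) * (1 + x) ^ q.2) * g p.2 := by
        simp only [mul_sum, sum_mul]
        rw [sum_antidiagonal_assoc (fun a b d => ((m + a).choose a : R) * ((1 + x) ^ b * g d))]
        exact sum_congr rfl fun _ _ => sum_congr rfl fun _ _ => by ring
    _ = ∑ p ∈ antidiagonal k, ∑ q ∈ antidiagonal p.1,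
          ((m + q.1 + q.2 + 1).choose q.1 : R) * x ^ q.2 * g p.2 := by
        refine sum_congr rfl fun p _ => ?_
        rw [sum_antidiagonal_choose_mul_one_add_pow, sum_mul]
        refine sum_congr rfl fun q hq => ?_
        rw [← HasAntidiagonal.mem_antidiagonal.1 hq]
        ring_nf
    _ = _ := by
        rw [sum_antidiagonal_antidiagonal_middle
          (fun a b d => ((m + a + b + 1).choose a : R) * x ^ b * g d)]
        refine sum_congr rfl fun p _ => ?_
        rw [mul_sum]
        exact sum_congr rfl fun q _ => by ring_nf

end Convolution

section HomogOn

variable {ι R : Type*} [DecidableEq ι] [CommSemiring R]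

noncomputable def homogOn (s : Finset ι) (m : ℕ) (x : ι → R) : R :=
  ∑ k ∈ s.piAntidiag m, ∏ j ∈ s, x j ^ k j

theorem homog_eq_homogOn_univ [Fintype ι] (m : ℕ) (x : ι → R) :
    homog m x = homogOn univ m x := rfl

theorem homogOn_empty (m : ℕ) (x : ι → R) : homogOn ∅ m x = if m = 0 then 1 else 0 := by
  rw [homogOn, piAntidiag_empty]
  split_ifs <;> simp

theorem homogOn_cons {i : ι} {s : Finset ι} (hi : i ∉ s) (m : ℕ) (x : ι → R) :
    homogOn (cons i s hi) m x = ∑ p ∈ antidiagonal m, x i ^ p.1 * homogOn s p.2 x := by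
  rw [homogOn, piAntidiag_cons, sum_disjiUnion]
  refine sum_congr rfl fun p _ => ?_
  rw [sum_map, homogOn, mul_sum]
  refine sum_congr rfl fun g hg => ?_
  have hgi : g i = 0 := by_contra fun h => hi ((mem_piAntidiag.1 hg).2 i h)
  have hs : ∀ j ∈ s, j ≠ i := fun j hj h => hi (h ▸ hj)
  rw [prod_cons]
  simp +contextual [hgi, hs]

theorem homogOn_mul_left (s : Finset ι) (m : ℕ) (c : R) (x : ι → R) :
    homogOn s m (fun i => c * x i) = c ^ m * homogOn s m x := by
  rw [homogOn, homogOn, mul_sum]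
  refine sum_congr rfl fun k hk => ?_
  rw [← (mem_piAntidiag.1 hk).1]
  simp only [mul_pow, prod_mul_distrib, prod_pow_eq_pow_sum]

theorem sum_antidiagonal_choose_mul_homogOn_one_add (x : ι → R) (s : Finset ι) (m k : ℕ) :
    ∑ p ∈ antidiagonal k, ((m + p.1).choose p.1 : R) * homogOn s p.2 (fun i => 1 + x i)
      = ∑ p ∈ antidiagonal k, ((m + k + #s).choose p.1 : R) * homogOn s p.2 x := by
  induction s using Finset.cons_induction generalizing m k with
  | empty =>
    simp only [homogOn_empty, card_empty, add_zero]
    rw [sum_antidiagonal_mul_ite_snd_eq_zero (fun p => ((m + p.1).choose p.1 : R)),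
      sum_antidiagonal_mul_ite_snd_eq_zero (fun p => ((m + k).choose p.1 : R))]
  | cons i s hi ih =>
    simp only [homogOn_cons]
    rw [sum_antidiagonal_choose_mul_sum_one_add_pow m (x i)
        (fun d => homogOn s d (fun i => 1 + x i)),
      sum_antidiagonal_mul_sum_antidiagonal_comm (fun a => ((m + k + #(cons i s hi)).choose a : R))
        (fun c => x i ^ c) (fun d => homogOn s d x)]
    refine sum_congr rfl fun p hp => ?_
    rw [ih, card_cons, ← HasAntidiagonal.mem_antidiagonal.1 hp]
    ring_nf

theorem sum_range_choose_mul_homog_one_add [Fintype ι] (x : ι → R) (m k : ℕ) :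
    ∑ a ∈ range (k + 1), ((m + a).choose a : R) * homog (k - a) (fun i => 1 + x i)
      = ∑ a ∈ range (k + 1), ((m + k + Fintype.card ι).choose a : R) * homog (k - a) x := by
  have h := sum_antidiagonal_choose_mul_homogOn_one_add x univ m k
  rw [Nat.sum_antidiagonal_eq_sum_range_succ
      (fun a b => ((m + a).choose a : R) * homogOn univ b (fun i => 1 + x i)),
    Nat.sum_antidiagonal_eq_sum_range_succ
      (fun a b => ((m + k + #univ).choose a : R) * homogOn univ b x)] at h
  simpa only [homog_eq_homogOn_univ, card_univ] using h

end HomogOn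

theorem card_sigma_ne {n : ℕ} (κ : Fin n → ℕ) (s : Fin n) :
    Fintype.card (Σ d : {d : Fin n // d ≠ s}, Fin (κ d.1)) = ∑ j, κ j - κ s := by
  rw [Fintype.card_sigma, ← add_sum_erase _ _ (mem_univ s), Nat.add_sub_cancel_left]
  simp only [Fintype.card_fin]
  exact (sum_subtype _ (fun d => by simp) κ).symm

section Coefficients

variable {K : Type*} [Field K] {n : ℕ} (y : Fin n → K) {κ : Fin n → ℕ} {s : Fin n}

theorem sum_Icc_mul_Acoef (hy : Function.Injective y) (b : ℕ → K) {k : ℕ} (hk : κ s = k + 1) :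
    ∑ r ∈ Icc 1 (κ s), b r * Acoef y κ s r
      = (-y s) ^ (∑ j, κ j - κ s) / (∏ d ∈ univ.erase s, (y d - y s) ^ κ d)
        * ∑ a ∈ range (k + 1), b (a + 1) * homog (k - a)
            (fun p : Σ d : {d : Fin n // d ≠ s}, Fin (κ d.1) => 1 + y s * (y p.1.1 - y s)⁻¹) := by
  have h_one_add : (fun p : Σ d : {d : Fin n // d ≠ s}, Fin (κ d.1) => y p.1.1 / (y p.1.1 - y s))
      = fun p => 1 + y s * (y p.1.1 - y s)⁻¹ := by
    funext p
    have : y p.1.1 - y s ≠ 0 := sub_ne_zero.2 fun h => p.1.2 (hy h)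
    field_simp
    ring
  rw [hk, sum_Icc_one_eq_sum_range, mul_sum]
  refine sum_congr rfl fun a _ => ?_
  rw [Acoef, h_one_add, hk, Nat.add_sub_add_right]
  ring

theorem sum_Icc_mul_Bcoef_mul_pow (b : ℕ → K) {k : ℕ} (hk : κ s = k + 1) :
    ∑ r ∈ Icc 1 (κ s), b r * Bcoef y κ s r * y s ^ (∑ j, κ j - r)
      = (-y s) ^ (∑ j, κ j - κ s) / (∏ d ∈ univ.erase s, (y d - y s) ^ κ d)
        * ∑ a ∈ range (k + 1), b (a + 1) * homog (k - a)
            (fun p : Σ d : {d : Fin n // d ≠ s}, Fin (κ d.1) => y s * (y p.1.1 - y s)⁻¹) := by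
  have hκN : κ s ≤ ∑ j, κ j := single_le_sum (fun _ _ => Nat.zero_le _) (mem_univ s)
  rw [hk, sum_Icc_one_eq_sum_range, mul_sum]
  refine sum_congr rfl fun a ha => ?_
  have ha : a ≤ k := Nat.lt_succ_iff.1 (mem_range.1 ha)
  rw [Bcoef, hk, Nat.add_sub_add_right, homog_eq_homogOn_univ, homog_eq_homogOn_univ,
    homogOn_mul_left, show ∑ j, κ j - (a + 1) = (∑ j, κ j - (k + 1)) + (k - a) by omega, pow_add,
    neg_pow (y s), div_eq_mul_inv]
  ring

end Coefficients

theorem stmt_19 (K : Type*) [Field K] (n : ℕ) (y : Fin n → K) (hy : Function.Injective y)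
    (κ : Fin n → ℕ) (hκ : ∀ j, 1 ≤ κ j) (s : Fin n) (m : ℕ) :
    ∑ r ∈ Finset.Icc 1 (κ s), ((m + r - 1).choose (r - 1) : K) * Acoef y κ s r
      = ∑ r ∈ Finset.Icc 1 (κ s),
          ((m + (∑ j, κ j) - 1).choose (r - 1) : K) * Bcoef y κ s r
            * y s ^ ((∑ j, κ j) - r) := by
  obtain ⟨k, hk⟩ : ∃ k, κ s = k + 1 := ⟨κ s - 1, by have := hκ s; omega⟩
  have hκN : κ s ≤ ∑ j, κ j := single_le_sum (fun _ _ => Nat.zero_le _) (mem_univ s)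
  rw [sum_Icc_mul_Acoef y hy (fun r => ((m + r - 1).choose (r - 1) : K)) hk,
    sum_Icc_mul_Bcoef_mul_pow y (fun r => ((m + ∑ j, κ j - 1).choose (r - 1) : K)) hk]
  simp only [Nat.add_sub_cancel, Nat.add_succ_sub_one]
  rw [sum_range_choose_mul_homog_one_add, card_sigma_ne,
    show m + k + (∑ j, κ j - κ s) = m + ∑ j, κ j - 1 by omega]
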